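/- Suppose φ, ψ : 𝓕 → 𝓔 are additive mappings such that ⟨φ(z), ψ(w)⟩ = 0 and a·⟨φ(z), φ(w)⟩·a* = (1−a)·⟨ψ(z), ψ(w)⟩·(1−a)* for all z, w ∈ 𝓕, and set 𝓚 := φ(𝓕) + ψ(𝓕) = {φ(x) + ψ(y) : x, y ∈ 𝓕}. If f : 𝓔 → 𝓖 is an even orthogonally a-Jensen mapping (f(−x) = f(x) for all x) with f(0) = 0, then f is quadratic on 𝓚, i.e. f(z₁ + z₂) + f(z₁ − z₂) = 2 f(z₁) + 2 f(z₂) for all z₁, z₂ ∈ 𝓚. -/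

import Mathlib

/-!
An orthogonally `a`-Jensen map with `f 0 = 0` is orthogonally additive: undo the scalings by `a`
and `1 - a`, which preserve orthogonality. Since `⟪φ z, ψ w⟫ = 0` and the two Gram matrices are
conjugate, the rescaled map `ψ <• star (⅟a * (1 - a))` is orthogonal to `φ` with the same Gram
matrix. For such a pair `p, q` of additive maps, the vectors `p z ± q z`, `p w ∓ q w` are mutually
orthogonal, and splitting `p (z + w) + q (z - w)` in two ways gives
`f (p (z + w)) + f (q (z - w)) = f (p z) + f (p w) + f (q z) + f (q w)`; halving shows
`f ∘ p = f ∘ q`, after which the same identity is the parallelogram law for `f ∘ p`. The same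
holds for `ψ`, and orthogonal additivity assembles both parallelogram laws on `φ(F) + ψ(F)`.
-/
open scoped RightActions

/-- The Hilbert C⋆-module class as it stood in Mathlib (December 2024): a right `A`-module
structure (via `Aᵐᵒᵖ`) and an `A`-valued inner product, `A`-linear in the second variable. -/
class RightCStarModule (A E : Type*) [NonUnitalSemiring A] [StarRing A] [Module ℂ A]
    [AddCommGroup E] [Module ℂ E] [PartialOrder A] [SMul Aᵐᵒᵖ E] [Norm A] [Norm E]
    extends Inner A E where
  inner_add_right {x} {y} {z} : inner x (y + z) = inner x y + inner x z
  inner_self_nonneg {x} : 0 ≤ inner x x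
  inner_self {x} : inner x x = 0 ↔ x = 0
  inner_op_smul_right {a : A} {x y : E} : inner x (y <• a) = inner x y * a
  inner_smul_right_complex {z : ℂ} {x} {y} : inner x (z • y) = z • inner x y
  star_inner x y : star (inner x y) = inner y x
  norm_eq_sqrt_norm_inner_self x : ‖x‖ = √‖inner x x‖

open scoped InnerProductSpace

namespace RightCStarModule

variable {A E : Type*} [Ring A] [StarRing A] [Module ℂ A] [PartialOrder A] [Norm A]
  [AddCommGroup E] [Module ℂ E] [Module Aᵐᵒᵖ E] [Norm E] [RightCStarModule A E]

def innerAddMonoidHom (x : E) : E →+ A :=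
  AddMonoidHom.mk' (inner A x) fun _ _ => inner_add_right

protected theorem inner_zero_right (x : E) : ⟪x, (0 : E)⟫_A = 0 :=
  (innerAddMonoidHom x).map_zero

protected theorem inner_neg_right (x y : E) : ⟪x, -y⟫_A = -⟪x, y⟫_A :=
  map_neg (innerAddMonoidHom x) y

protected theorem inner_sub_right (x y z : E) : ⟪x, y - z⟫_A = ⟪x, y⟫_A - ⟪x, z⟫_A :=
  map_sub (innerAddMonoidHom x) y z

protected theorem inner_add_left (x y z : E) : ⟪x + y, z⟫_A = ⟪x, z⟫_A + ⟪y, z⟫_A := by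
  rw [← star_inner, inner_add_right, star_add, star_inner, star_inner]

theorem inner_eq_zero_symm {x y : E} (h : ⟪x, y⟫_A = 0) : ⟪y, x⟫_A = 0 := by
  rw [← star_inner, h, star_zero]

protected theorem inner_zero_left (y : E) : ⟪(0 : E), y⟫_A = 0 :=
  inner_eq_zero_symm (RightCStarModule.inner_zero_right y)

theorem inner_op_smul_op_smul (x y : E) (b c : A) :
    ⟪x <• b, y <• c⟫_A = star b * ⟪x, y⟫_A * c := by
  rw [inner_op_smul_right, ← star_inner, inner_op_smul_right, star_mul, star_inner]

variable {V M : Type*} [AddCommGroup V] [AddCommGroup M] {f : E → M}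

theorem map_add_add_map_sub_of_companion
    (hadd : ∀ x y : E, ⟪x, y⟫_A = 0 → f (x + y) = f x + f y)
    (heven : ∀ x, f (-x) = f x) (p q : V →+ E) (hpq : ∀ z w, ⟪p z, q w⟫_A = 0)
    (hqq : ∀ z w, ⟪q z, q w⟫_A = ⟪p z, p w⟫_A) (z w : V) :
    f (p (z + w)) + f (q (z - w)) = f (p z) + f (p w) + f (q z) + f (q w) := by
  have h₁ : ⟪p z + q z, p w - q w⟫_A = 0 := by
    rw [RightCStarModule.inner_add_left, RightCStarModule.inner_sub_right,
      RightCStarModule.inner_sub_right, hpq, hqq, inner_eq_zero_symm (hpq w z)]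
    abel
  have h₂ : ⟪p z + p w, q z - q w⟫_A = 0 := by
    simp only [RightCStarModule.inner_add_left, RightCStarModule.inner_sub_right, hpq, sub_zero,
      add_zero]
  have h₃ : f (p w - q w) = f (p w) + f (q w) := by
    rw [sub_eq_add_neg, hadd _ _ (by rw [RightCStarModule.inner_neg_right, hpq, neg_zero]), heven]
  calc f (p (z + w)) + f (q (z - w)) = f (p z + p w + (q z - q w)) := by
        rw [map_add, map_sub, hadd _ _ h₂]
    _ = f (p z + q z + (p w - q w)) := by congr 1; abel
    _ = f (p z) + f (p w) + f (q z) + f (q w) := by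
        rw [hadd _ _ h₁, hadd _ _ (hpq z z), h₃]; abel

theorem comp_eq_of_companion [Module ℂ V]
    (hadd : ∀ x y : E, ⟪x, y⟫_A = 0 → f (x + y) = f x + f y)
    (heven : ∀ x, f (-x) = f x) (p q : V →+ E) (hpq : ∀ z w, ⟪p z, q w⟫_A = 0)
    (hqq : ∀ z w, ⟪q z, q w⟫_A = ⟪p z, p w⟫_A) (u : V) : f (p u) = f (q u) := by
  have hf0 : f 0 = 0 := by simpa using hadd 0 0 (RightCStarModule.inner_zero_right 0)
  obtain ⟨z, rfl⟩ : ∃ z, z + z = u := ⟨(2⁻¹ : ℂ) • u, by rw [← add_smul]; norm_num⟩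
  have h₁ := map_add_add_map_sub_of_companion hadd heven p q hpq hqq z z
  have h₂ := map_add_add_map_sub_of_companion hadd heven p q hpq hqq z (-z)
  simp only [sub_self, add_neg_cancel, sub_neg_eq_add, map_zero, map_neg, heven, hf0, add_zero,
    zero_add] at h₁ h₂
  rw [h₁, h₂]

theorem parallelogram_comp_of_companion [Module ℂ V]
    (hadd : ∀ x y : E, ⟪x, y⟫_A = 0 → f (x + y) = f x + f y)
    (heven : ∀ x, f (-x) = f x) (p q : V →+ E) (hpq : ∀ z w, ⟪p z, q w⟫_A = 0)
    (hqq : ∀ z w, ⟪q z, q w⟫_A = ⟪p z, p w⟫_A) (z w : V) :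
    f (p z + p w) + f (p z - p w) = 2 • f (p z) + 2 • f (p w) := by
  have hpq' := comp_eq_of_companion hadd heven p q hpq hqq
  rw [← map_add, ← map_sub, hpq' (z - w),
    map_add_add_map_sub_of_companion hadd heven p q hpq hqq, ← hpq' z, ← hpq' w]
  abel

theorem parallelogram_comp_of_conj_inner [Module ℂ V]
    (hadd : ∀ x y : E, ⟪x, y⟫_A = 0 → f (x + y) = f x + f y)
    (heven : ∀ x, f (-x) = f x) (p q : V →+ E) (b c : A) [Invertible b]
    (hpq : ∀ z w, ⟪p z, q w⟫_A = 0)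
    (hconj : ∀ z w, b * ⟪p z, p w⟫_A * star b = c * ⟪q z, q w⟫_A * star c) (z w : V) :
    f (p z + p w) + f (p z - p w) = 2 • f (p z) + 2 • f (p w) := by
  let t : A := star (⅟b * c)
  refine parallelogram_comp_of_companion hadd heven p
    ((DistribSMul.toAddMonoidHom E (MulOpposite.op t)).comp q) (fun z w => ?_) (fun z w => ?_) z w
  · change ⟪p z, q w <• t⟫_A = 0
    rw [inner_op_smul_right, hpq, zero_mul]
  · change ⟪q z <• t, q w <• t⟫_A = ⟪p z, p w⟫_A
    calc ⟪q z <• t, q w <• t⟫_A = ⅟b * (c * ⟪q z, q w⟫_A * star c) * star ⅟b := by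
          simp only [t, inner_op_smul_op_smul, star_star, star_mul, mul_assoc]
      _ = ⟪p z, p w⟫_A := by
          rw [← hconj, star_invOf]
          simp only [mul_assoc, mul_invOf_self, mul_one, invOf_mul_cancel_left]

theorem parallelogram_of_orth_ranges
    (hadd : ∀ x y : E, ⟪x, y⟫_A = 0 → f (x + y) = f x + f y)
    (p q : V →+ E) (hpq : ∀ z w, ⟪p z, q w⟫_A = 0)
    (hp : ∀ z w, f (p z + p w) + f (p z - p w) = 2 • f (p z) + 2 • f (p w))
    (hq : ∀ z w, f (q z + q w) + f (q z - q w) = 2 • f (q z) + 2 • f (q w)) (x₁ y₁ x₂ y₂ : V) :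
    f (p x₁ + q y₁ + (p x₂ + q y₂)) + f (p x₁ + q y₁ - (p x₂ + q y₂))
      = 2 • f (p x₁ + q y₁) + 2 • f (p x₂ + q y₂) := by
  have hsplit : ∀ x y, f (p x + q y) = f (p x) + f (q y) := fun x y => hadd _ _ (hpq x y)
  calc f (p x₁ + q y₁ + (p x₂ + q y₂)) + f (p x₁ + q y₁ - (p x₂ + q y₂))
      = f (p (x₁ + x₂) + q (y₁ + y₂)) + f (p (x₁ - x₂) + q (y₁ - y₂)) := by
        rw [map_add, map_add, map_sub, map_sub]; congr 2 <;> abel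
    _ = (f (p x₁ + p x₂) + f (p x₁ - p x₂)) + (f (q y₁ + q y₂) + f (q y₁ - q y₂)) := by
        rw [hsplit, hsplit, map_add, map_add, map_sub, map_sub]; abel
    _ = 2 • f (p x₁ + q y₁) + 2 • f (p x₂ + q y₂) := by
        rw [hp, hq, hsplit, hsplit, smul_add, smul_add]; abel

end RightCStarModule

open RightCStarModule

variable {A : Type*} [CStarAlgebra A] [PartialOrder A] [StarOrderedRing A]
variable {E : Type*} [NormedAddCommGroup E] [Module ℂ E] [Module Aᵐᵒᵖ E] [RightCStarModule A E]
variable {F : Type*} [NormedAddCommGroup F] [Module ℂ F] [Module Aᵐᵒᵖ F] [RightCStarModule A F]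
variable {G : Type*} [NormedAddCommGroup G] [Module ℂ G] [Module Aᵐᵒᵖ G] [RightCStarModule A G]

/-- A mapping `f : E → G` between inner product `A`-modules is *orthogonally `a`-Jensen* if
`⟪x, y⟫ = 0` implies `f (a·x + (1-a)·y) = a·f x + (1-a)·f y` (module actions written as right
actions `<•`, since `E`, `G` are right `A`-modules). -/
def OrthAJensen (a : A) (f : E → G) : Prop :=
  ∀ x y : E, inner (𝕜 := A) x y = 0 →
    f (x <• a + y <• (1 - a)) = f x <• a + f y <• (1 - a)

namespace OrthAJensen

variable {A : Type*} [CStarAlgebra A] [PartialOrder A]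
  {E : Type*} [NormedAddCommGroup E] [Module ℂ E] [Module Aᵐᵒᵖ E] [RightCStarModule A E]
  {G : Type*} [NormedAddCommGroup G] [Module Aᵐᵒᵖ G]
  {a : A} [Invertible a] [Invertible (1 - a)] {f : E → G}

theorem map_add_eq (hf : OrthAJensen a f) {x y : E} (h : ⟪x, y⟫_A = 0) :
    f (x + y) = f (x <• ⅟a) <• a + f (y <• ⅟(1 - a)) <• (1 - a) := by
  have := hf (x <• ⅟a) (y <• ⅟(1 - a)) (by rw [inner_op_smul_op_smul, h, mul_zero, zero_mul])
  simpa only [op_smul_op_smul, invOf_mul_self, MulOpposite.op_one, one_smul] using this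

theorem map_add_of_inner_eq_zero (hf : OrthAJensen a f) (hf0 : f 0 = 0) {x y : E}
    (h : ⟪x, y⟫_A = 0) : f (x + y) = f x + f y := by
  have hx := hf.map_add_eq (RightCStarModule.inner_zero_right x)
  have hy := hf.map_add_eq (RightCStarModule.inner_zero_left y)
  simp only [add_zero, zero_add, smul_zero, hf0] at hx hy
  rw [hf.map_add_eq h, hx, hy]

end OrthAJensen

/-- Proposition 2.5: an even orthogonally `a`-Jensen mapping with `f 0 = 0` is quadratic on
`K = φ(F) + ψ(F)`. -/
theorem even_quadratic_on_K (a : A) [Invertible a] [Invertible (1 - a)] (φ ψ : F → E)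
    (hφ : ∀ z w : F, φ (z + w) = φ z + φ w)
    (hψ : ∀ z w : F, ψ (z + w) = ψ z + ψ w)
    (horth : ∀ z w : F, inner (𝕜 := A) (φ z) (ψ w) = 0)
    (heq : ∀ z w : F,
      a * inner (𝕜 := A) (φ z) (φ w) * star a
        = (1 - a) * inner (𝕜 := A) (ψ z) (ψ w) * star (1 - a))
    (f : E → G) (hf : OrthAJensen a f) (heven : ∀ x : E, f (-x) = f x) (hf0 : f 0 = 0) :
    ∀ z₁ z₂ : E, (∃ x y : F, z₁ = φ x + ψ y) → (∃ x y : F, z₂ = φ x + ψ y) →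
      f (z₁ + z₂) + f (z₁ - z₂) = 2 • f z₁ + 2 • f z₂ := by
  let Φ : F →+ E := AddMonoidHom.mk' φ hφ
  let Ψ : F →+ E := AddMonoidHom.mk' ψ hψ
  have hadd : ∀ x y : E, ⟪x, y⟫_A = 0 → f (x + y) = f x + f y :=
    fun _ _ => hf.map_add_of_inner_eq_zero hf0
  have hΦ := parallelogram_comp_of_conj_inner hadd heven Φ Ψ a (1 - a) horth heq
  have hΨ := parallelogram_comp_of_conj_inner hadd heven Ψ Φ (1 - a) a
    (fun z w => inner_eq_zero_symm (horth w z)) (fun z w => (heq z w).symm)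
  rintro _ _ ⟨x₁, y₁, rfl⟩ ⟨x₂, y₂, rfl⟩
  exact parallelogram_of_orth_ranges hadd Φ Ψ horth hΦ hΨ x₁ y₁ x₂ y₂
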